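/- arXiv:2505.23513 — 8 statements merged into one kernel-verified Lean document; each statement's English description precedes it below -/
import Mathlib

section
/- Let F : ℝ → ℝ be continuous and let x : ℝ → ℝ be differentiable with deriv x t = F (x t) for every t ∈ ℝ. Then x is monotone (either monotonically nondecreasing on ℝ or monotonically nonincreasing on ℝ). -/
open Set Filter Topology

lemma right_of_pos {x : ℝ → ℝ} {p q : ℝ} (hx : DifferentiableAt ℝ x p)
    (hd : 0 < deriv x p) (hpq : p < q) : ∃ s ∈ Set.Icc p q, x p < x s := by
  have h := hx.hasDerivAt
  rw [hasDerivAt_iff_tendsto_slope] at h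
  have h' : Tendsto (slope x p) (𝓝[>] p) (𝓝 (deriv x p)) :=
    h.mono_left (nhdsWithin_mono _ (fun t ht => ne_of_gt ht))
  have h1 : ∀ᶠ s in 𝓝[>] p, 0 < slope x p s := h'.eventually (eventually_gt_nhds hd)
  have h2 : ∀ᶠ s in 𝓝[>] p, s ∈ Ioo p q := Ioo_mem_nhdsGT hpq
  obtain ⟨s, hs1, hs2⟩ := (h1.and h2).exists
  refine ⟨s, ⟨hs2.1.le, hs2.2.le⟩, ?_⟩
  rw [slope_def_field, div_pos_iff] at hs1
  rcases hs1 with ⟨h, _⟩ | ⟨_, h⟩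
  · linarith
  · linarith [hs2.1]

lemma left_of_neg {x : ℝ → ℝ} {p q : ℝ} (hx : DifferentiableAt ℝ x q)
    (hd : deriv x q < 0) (hpq : p < q) : ∃ s ∈ Set.Icc p q, x q < x s := by
  have h := hx.hasDerivAt
  rw [hasDerivAt_iff_tendsto_slope] at h
  have h' : Tendsto (slope x q) (𝓝[<] q) (𝓝 (deriv x q)) :=
    h.mono_left (nhdsWithin_mono _ (fun t ht => ne_of_lt ht))
  have h1 : ∀ᶠ s in 𝓝[<] q, slope x q s < 0 := h'.eventually (eventually_lt_nhds hd)
  have h2 : ∀ᶠ s in 𝓝[<] q, s ∈ Ioo p q := Ioo_mem_nhdsLT hpq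
  obtain ⟨s, hs1, hs2⟩ := (h1.and h2).exists
  refine ⟨s, ⟨hs2.1.le, hs2.2.le⟩, ?_⟩
  rw [slope_def_field, div_neg_iff] at hs1
  rcases hs1 with ⟨_, h⟩ | ⟨h, _⟩
  · linarith
  · linarith [hs2.2]

lemma key_hump (x : ℝ → ℝ) (hx : Differentiable ℝ x)
    (hod : ∀ s t : ℝ, x s = x t → deriv x s = deriv x t) {p q : ℝ} (hpq : p < q)
    (h1 : ∃ s ∈ Set.Icc p q, x p < x s) (h2 : ∃ s ∈ Set.Icc p q, x q < x s) : False := by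
  have cont : Continuous x := hx.continuous
  obtain ⟨t2, ht2m, hmax⟩ := isCompact_Icc.exists_isMaxOn (nonempty_Icc.2 hpq.le)
    cont.continuousOn
  obtain ⟨s1, hs1m, hs1⟩ := h1
  obtain ⟨s2, hs2m, hs2⟩ := h2
  set M := x t2 with hM
  have hpM : x p < M := lt_of_lt_of_le hs1 (hmax hs1m)
  have hqM : x q < M := lt_of_lt_of_le hs2 (hmax hs2m)
  set m := max (x p) (x q) with hm
  have hmM : m < M := max_lt hpM hqM
  set c1 := m + (M - m)/3 with hc1
  set c2 := m + 2*(M - m)/3 with hc2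
  have hmc1 : m < c1 := by rw [hc1]; linarith
  have h12 : c1 < c2 := by rw [hc1, hc2]; linarith
  have hc2M : c2 < M := by rw [hc2]; linarith
  have hxpm : x p ≤ m := le_max_left _ _
  have hxqm : x q ≤ m := le_max_right _ _
  have ht2p : p < t2 := lt_of_le_of_ne ht2m.1 (fun h => ne_of_lt hpM (congrArg x h))
  have ht2q : t2 < q := lt_of_le_of_ne ht2m.2 (fun h => ne_of_lt hqM (congrArg x h).symm)
  -- a = last time in [p, t2] hitting c1
  set A := Icc p t2 ∩ x ⁻¹' {c1} with hA
  have hAcl : IsClosed A := isClosed_Icc.inter (isClosed_singleton.preimage cont)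
  have hAbdd : BddAbove A := bddAbove_Icc.mono inter_subset_left
  have hAne : A.Nonempty := by
    obtain ⟨a0, ha0, hxa0⟩ := intermediate_value_Icc ht2p.le cont.continuousOn
      (⟨by linarith, by linarith⟩ : c1 ∈ Icc (x p) (x t2))
    exact ⟨a0, ha0, hxa0⟩
  set a := sSup A with ha
  have haA : a ∈ A := hAcl.csSup_mem hAne hAbdd
  have hxa : x a = c1 := haA.2
  have hat2 : a < t2 := lt_of_le_of_ne haA.1.2 (fun h => by
    have h2 : M = c1 := (congrArg x h).symm.trans hxa
    linarith)
  have claim1 : ∀ t ∈ Ioc a t2, c1 < x t := by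
    intro t ht
    by_contra hcon
    push_neg at hcon
    rcases eq_or_lt_of_le hcon with heq | hlt
    · have : t ∈ A := ⟨⟨le_trans haA.1.1 ht.1.le, ht.2⟩, heq⟩
      exact absurd (le_csSup hAbdd this) (not_le.2 ht.1)
    · obtain ⟨u, hu, hxu⟩ := intermediate_value_Icc ht.2 cont.continuousOn
        (⟨hlt.le, by linarith⟩ : c1 ∈ Icc (x t) (x t2))
      have : u ∈ A := ⟨⟨le_trans haA.1.1 (le_trans ht.1.le hu.1), hu.2⟩, hxu⟩
      have := le_csSup hAbdd this
      have : t ≤ a := le_trans hu.1 this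
      exact absurd this (not_le.2 ht.1)
  -- b = first time in [a, t2] hitting c2
  set B := Icc a t2 ∩ x ⁻¹' {c2} with hB
  have hBcl : IsClosed B := isClosed_Icc.inter (isClosed_singleton.preimage cont)
  have hBbdd : BddBelow B := bddBelow_Icc.mono inter_subset_left
  have hBne : B.Nonempty := by
    obtain ⟨b0, hb0, hxb0⟩ := intermediate_value_Icc hat2.le cont.continuousOn
      (⟨by rw [hxa]; linarith, by linarith⟩ : c2 ∈ Icc (x a) (x t2))
    exact ⟨b0, hb0, hxb0⟩
  set b := sInf B with hb
  have hbB : b ∈ B := hBcl.csInf_mem hBne hBbdd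
  have hxb : x b = c2 := hbB.2
  have hab : a < b := lt_of_le_of_ne hbB.1.1 (fun h => by
    have h2 : c1 = c2 := hxa.symm.trans ((congrArg x h).trans hxb)
    linarith)
  have claim2 : ∀ t ∈ Ico a b, x t < c2 := by
    intro t ht
    by_contra hcon
    push_neg at hcon
    rcases eq_or_lt_of_le hcon with heq | hlt
    · have : t ∈ B := ⟨⟨ht.1, le_trans ht.2.le hbB.1.2⟩, heq.symm⟩
      exact absurd (csInf_le hBbdd this) (not_le.2 ht.2)
    · obtain ⟨u, hu, hxu⟩ := intermediate_value_Icc ht.1 cont.continuousOn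
        (⟨by rw [hxa]; linarith, hlt.le⟩ : c2 ∈ Icc (x a) (x t))
      have : u ∈ B := ⟨⟨hu.1, le_trans hu.2 (le_trans ht.2.le hbB.1.2)⟩, hxu⟩
      have := csInf_le hBbdd this
      have : b ≤ t := le_trans this hu.2
      exact absurd this (not_le.2 ht.2)
  -- MVT on [a, b]
  obtain ⟨ξ, hξm, hξd⟩ := exists_deriv_eq_slope x hab cont.continuousOn (fun y _ => (hx y).differentiableWithinAt)
  set c := x ξ with hc
  have hcc1 : c1 < c := claim1 ξ ⟨hξm.1, le_trans hξm.2.le hbB.1.2⟩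
  have hcc2 : c < c2 := claim2 ξ ⟨hξm.1.le, hξm.2⟩
  have hdξ : 0 < deriv x ξ := by
    rw [hξd, hxa, hxb]
    exact div_pos (by linarith) (by linarith)
  -- b' = first time in [t2, q] hitting c
  set B' := Icc t2 q ∩ x ⁻¹' {c} with hB'
  have hB'cl : IsClosed B' := isClosed_Icc.inter (isClosed_singleton.preimage cont)
  have hB'bdd : BddBelow B' := bddBelow_Icc.mono inter_subset_left
  have hB'ne : B'.Nonempty := by
    obtain ⟨b0, hb0, hxb0⟩ := intermediate_value_Icc' ht2q.le cont.continuousOn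
      (⟨by linarith, by linarith⟩ : c ∈ Icc (x q) (x t2))
    exact ⟨b0, hb0, hxb0⟩
  set b' := sInf B' with hb'
  have hb'B : b' ∈ B' := hB'cl.csInf_mem hB'ne hB'bdd
  have hxb' : x b' = c := hb'B.2
  have ht2b' : t2 < b' := lt_of_le_of_ne hb'B.1.1 (fun h => by
    have h2 : M = c := (congrArg x h).trans hxb'
    linarith)
  have claim3 : ∀ t ∈ Ico t2 b', c < x t := by
    intro t ht
    by_contra hcon
    push_neg at hcon
    rcases eq_or_lt_of_le hcon with heq | hlt
    · have : t ∈ B' := ⟨⟨ht.1, le_trans ht.2.le hb'B.1.2⟩, heq⟩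
      exact absurd (csInf_le hB'bdd this) (not_le.2 ht.2)
    · obtain ⟨u, hu, hxu⟩ := intermediate_value_Icc' ht.1 cont.continuousOn
        (⟨hlt.le, by linarith⟩ : c ∈ Icc (x t) (x t2))
      have : u ∈ B' := ⟨⟨hu.1, le_trans hu.2 (le_trans ht.2.le hb'B.1.2)⟩, hxu⟩
      have := csInf_le hB'bdd this
      have : b' ≤ t := le_trans this hu.2
      exact absurd this (not_le.2 ht.2)
  -- derivative at b' is positive, yet x decreases into b' from the left
  have hdb' : 0 < deriv x b' := by rw [hod b' ξ hxb']; exact hdξ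
  have h := (hx b').hasDerivAt
  rw [hasDerivAt_iff_tendsto_slope] at h
  have h' : Tendsto (slope x b') (𝓝[<] b') (𝓝 (deriv x b')) :=
    h.mono_left (nhdsWithin_mono _ (fun t ht => ne_of_lt ht))
  have he1 : ∀ᶠ s in 𝓝[<] b', 0 < slope x b' s := h'.eventually (eventually_gt_nhds hdb')
  have he2 : ∀ᶠ s in 𝓝[<] b', s ∈ Ioo t2 b' := Ioo_mem_nhdsLT ht2b'
  obtain ⟨s, hsl, hsm⟩ := (he1.and he2).exists
  rw [slope_def_field, div_pos_iff] at hsl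
  have hxs : c < x s := claim3 s ⟨hsm.1.le, hsm.2⟩
  rcases hsl with ⟨h1', h2'⟩ | ⟨h1', h2'⟩
  · linarith [hsm.2]
  · rw [hxb'] at h1'; linarith

/-- Every solution of a scalar autonomous ODE `ẋ = F(x)` on `ℝ` is monotone. -/
theorem solution_of_autonomous_ode_is_monotone
    (F : ℝ → ℝ) (hF : Continuous F)
    (x : ℝ → ℝ) (hx : Differentiable ℝ x)
    (hode : ∀ t : ℝ, deriv x t = F (x t)) :
    Monotone x ∨ Antitone x := by
  by_cases hpos : ∀ t, 0 ≤ deriv x t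
  · exact Or.inl (monotone_of_deriv_nonneg hx hpos)
  by_cases hneg : ∀ t, deriv x t ≤ 0
  · exact Or.inr (antitone_of_deriv_nonpos hx hneg)
  exfalso
  push_neg at hpos hneg
  obtain ⟨q, hq⟩ := hpos
  obtain ⟨p, hp⟩ := hneg
  have hod : ∀ s t : ℝ, x s = x t → deriv x s = deriv x t := by
    intro s t h; rw [hode s, hode t, h]
  rcases lt_trichotomy p q with hlt | heq | hgt
  · -- hump for x on [p, q]
    exact key_hump x hx hod hlt
      (right_of_pos (hx p) hp hlt)
      (left_of_neg (hx q) hq hlt)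
  · rw [heq] at hp; linarith
  · -- valley for x on [q, p]: hump for -x
    have hxn : Differentiable ℝ (fun t => -x t) := hx.neg
    have hdn : ∀ t, deriv (fun t => -x t) t = -deriv x t := fun t => deriv.neg
    have hodn : ∀ s t : ℝ, (fun t => -x t) s = (fun t => -x t) t →
        deriv (fun t => -x t) s = deriv (fun t => -x t) t := by
      intro s t h
      simp only [hdn]
      exact congrArg Neg.neg (hod s t (neg_injective h))
    refine key_hump (fun t => -x t) hxn hodn hgt ?_ ?_
    · exact right_of_pos (hxn q) (by rw [hdn]; linarith) hgt
    · exact left_of_neg (hxn p) (by rw [hdn]; linarith) hgt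
end

section
/- Let c, r > 0 and define V : ℝ × ℝ → ℝ by V (y, w) = r·y − c·Real.log y + w − Real.log w. Then for every K ∈ ℝ, the sublevel set {(y, w) ∈ ℝ × ℝ : y > 0 ∧ w > 0 ∧ V (y, w) ≤ K} is compact. -/
/-- For positive `t, k`, `log t ≤ t/k - 1 + log k`. -/
lemma goodwin_log_le_aux (t k : ℝ) (ht : 0 < t) (hk : 0 < k) :
    Real.log t ≤ t / k - 1 + Real.log k := by
  have h := Real.log_le_sub_one_of_pos (div_pos ht hk)
  rw [Real.log_div ht.ne' hk.ne'] at h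
  linarith

/-- Sublevel sets of the Goodwin first integral
`V(y,w) = r·y − c·log y + w − log w` inside the open positive quadrant are
compact. -/
theorem goodwin_first_integral_sublevel_compact
    (c r : ℝ) (hc : 0 < c) (hr : 0 < r)
    (V : ℝ × ℝ → ℝ)
    (hV : ∀ y w : ℝ, V (y, w) = r * y - c * Real.log y + w - Real.log w) :
    ∀ K : ℝ, IsCompact {p : ℝ × ℝ | 0 < p.1 ∧ 0 < p.2 ∧ V p ≤ K} := by
  intro K
  have hV' : ∀ p : ℝ × ℝ, V p = r * p.1 - c * Real.log p.1 + p.2 - Real.log p.2 :=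
    fun p => hV p.1 p.2
  obtain ⟨m₁, hm₁⟩ : ∃ m : ℝ, m = c - c * Real.log (c / r) := ⟨_, rfl⟩
  obtain ⟨m₂, hm₂⟩ : ∃ m : ℝ, m = c - c * Real.log (2 * c / r) := ⟨_, rfl⟩
  obtain ⟨a₁, ha₁⟩ : ∃ a : ℝ, a = Real.exp ((1 - K) / c) := ⟨_, rfl⟩
  obtain ⟨b₁, hb₁⟩ : ∃ b : ℝ, b = 2 * (K - 1 - m₂) / r := ⟨_, rfl⟩
  obtain ⟨a₂, ha₂⟩ : ∃ a : ℝ, a = Real.exp (m₁ - K) := ⟨_, rfl⟩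
  obtain ⟨b₂, hb₂⟩ : ∃ b : ℝ, b = 2 * (K - m₁ - 1 + Real.log 2) := ⟨_, rfl⟩
  have ha₁pos : 0 < a₁ := ha₁ ▸ Real.exp_pos _
  have ha₂pos : 0 < a₂ := ha₂ ▸ Real.exp_pos _
  -- key pointwise bounds
  have hwlb : ∀ w : ℝ, 0 < w → 1 ≤ w - Real.log w := by
    intro w hw
    have := Real.log_le_sub_one_of_pos hw
    linarith
  have hylb : ∀ y : ℝ, 0 < y → m₁ ≤ r * y - c * Real.log y := by
    intro y hy
    have h := goodwin_log_le_aux y (c / r) hy (div_pos hc hr)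
    have h2 : c * Real.log y ≤ c * (y / (c / r) - 1 + Real.log (c / r)) :=
      mul_le_mul_of_nonneg_left h hc.le
    have h3 : c * (y / (c / r) - 1 + Real.log (c / r)) = r * y - c + c * Real.log (c / r) := by
      field_simp
    rw [h3] at h2
    linarith
  have hylb2 : ∀ y : ℝ, 0 < y → m₂ ≤ r / 2 * y - c * Real.log y := by
    intro y hy
    have h := goodwin_log_le_aux y (2 * c / r) hy (by positivity)
    have h2 : c * Real.log y ≤ c * (y / (2 * c / r) - 1 + Real.log (2 * c / r)) :=
      mul_le_mul_of_nonneg_left h hc.le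
    have h3 : c * (y / (2 * c / r) - 1 + Real.log (2 * c / r)) = r / 2 * y - c + c * Real.log (2 * c / r) := by
      field_simp
    rw [h3] at h2
    linarith
  have hwlb2 : ∀ w : ℝ, 0 < w → 1 - Real.log 2 ≤ w / 2 - Real.log w := by
    intro w hw
    have h := goodwin_log_le_aux w 2 hw (by norm_num)
    linarith
  -- the sublevel set equals a closed subset of a compact rectangle
  have hset : {p : ℝ × ℝ | 0 < p.1 ∧ 0 < p.2 ∧ V p ≤ K} =
      (Set.Icc a₁ b₁ ×ˢ Set.Icc a₂ b₂) ∩ V ⁻¹' Set.Iic K := by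
    ext ⟨y, w⟩
    simp only [Set.mem_setOf_eq, Set.mem_inter_iff, Set.mem_prod, Set.mem_Icc,
      Set.mem_preimage, Set.mem_Iic]
    constructor
    · rintro ⟨hy, hw, hVle⟩
      rw [hV'] at hVle
      simp only at hVle hy hw
      have h1 := hwlb w hw
      have h2 := hylb y hy
      have h3 := hylb2 y hy
      have h4 := hwlb2 w hw
      refine ⟨⟨⟨?_, ?_⟩, ?_, ?_⟩, ?_⟩
      · -- a₁ ≤ y
        have hlog : (1 - K) / c ≤ Real.log y := by
          rw [div_le_iff₀ hc]
          nlinarith [mul_pos hr hy]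
        calc a₁ = Real.exp ((1 - K) / c) := ha₁
          _ ≤ Real.exp (Real.log y) := Real.exp_le_exp.mpr hlog
          _ = y := Real.exp_log hy
      · -- y ≤ b₁
        have h5 : r / 2 * y ≤ K - 1 - m₂ := by nlinarith
        rw [hb₁, le_div_iff₀ hr]
        nlinarith
      · -- a₂ ≤ w
        have hlog : m₁ - K ≤ Real.log w := by nlinarith
        calc a₂ = Real.exp (m₁ - K) := ha₂
          _ ≤ Real.exp (Real.log w) := Real.exp_le_exp.mpr hlog
          _ = w := Real.exp_log hw
      · -- w ≤ b₂
        have : w / 2 ≤ K - m₁ - 1 + Real.log 2 := by nlinarith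
        rw [hb₂]; linarith
      · rw [hV']; simpa using hVle
    · rintro ⟨⟨⟨hy1, _⟩, hw1, _⟩, hVle⟩
      exact ⟨lt_of_lt_of_le ha₁pos hy1, lt_of_lt_of_le ha₂pos hw1, hVle⟩
  rw [hset]
  have hcomp : IsCompact (Set.Icc a₁ b₁ ×ˢ Set.Icc a₂ b₂) :=
    isCompact_Icc.prod isCompact_Icc
  have hcontg : ContinuousOn
      (fun p : ℝ × ℝ => r * p.1 - c * Real.log p.1 + p.2 - Real.log p.2)
      (Set.Icc a₁ b₁ ×ˢ Set.Icc a₂ b₂) := by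
    apply ContinuousOn.sub
    apply ContinuousOn.add
    apply ContinuousOn.sub
    · exact (continuous_const.mul continuous_fst).continuousOn
    · exact continuousOn_const.mul (ContinuousOn.log continuous_fst.continuousOn
        fun p hp => ne_of_gt (lt_of_lt_of_le ha₁pos hp.1.1))
    · exact continuous_snd.continuousOn
    · exact ContinuousOn.log continuous_snd.continuousOn
        fun p hp => ne_of_gt (lt_of_lt_of_le ha₂pos hp.2.1)
  have hcont : ContinuousOn V (Set.Icc a₁ b₁ ×ˢ Set.Icc a₂ b₂) :=
    hcontg.congr fun p _ => hV' p
  have hclosed : IsClosed ((Set.Icc a₁ b₁ ×ˢ Set.Icc a₂ b₂) ∩ V ⁻¹' Set.Iic K) :=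
    hcont.preimage_isClosed_of_isClosed
      ((isClosed_Icc).prod isClosed_Icc) isClosed_Iic
  exact hcomp.of_isClosed_subset hclosed Set.inter_subset_left
end

section
/- Let c, r, p > 0 with r > c·p, put y* = 1/p, w* = r/p − c, and let J be the 3×3 real matrix ![![0, 0, −y*], ![r·w*, −w*, 0], ![p, 0, 0]]. Then the characteristic polynomial of J equals (X + w*)·(X² + 1); in particular, the eigenvalues of J over ℂ are exactly −w*, Complex.I and −Complex.I. -/
open Polynomial

lemma spec_eq_charpoly_roots (M : Matrix (Fin 3) (Fin 3) ℂ) :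
    spectrum ℂ M = {z | M.charpoly.eval z = 0} := by
  have hdet : ∀ z : ℂ,
      M.charpoly.eval z = ((algebraMap ℂ (Matrix (Fin 3) (Fin 3) ℂ) z) - M).det := by
    intro z
    rw [Matrix.charpoly, ← Polynomial.coe_evalRingHom, RingHom.map_det]
    congr 1
    ext i j
    by_cases h : i = j
    · subst h
      simp [Matrix.charmatrix_apply_eq, Matrix.algebraMap_matrix_apply]
    · simp [Matrix.charmatrix_apply_ne _ _ _ h, Matrix.algebraMap_matrix_apply, h]
  ext z
  rw [spectrum.mem_iff, Set.mem_setOf_eq, hdet,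
    Matrix.isUnit_iff_isUnit_det, isUnit_iff_ne_zero, not_not]

/-- At the Hopf bifurcation value `s = 0`, the Jacobian of the Minsky model
with reserve-army distribution has characteristic polynomial
`(X + w*)(X² + 1)`, with eigenvalues `−w*, i, −i` over `ℂ`. -/
theorem minsky_wage_led_jacobian_charpoly_s_zero
    (c r p : ℝ) (hc : 0 < c) (hr : 0 < r) (hp : 0 < p) (h : c * p < r)
    (ys ws : ℝ) (hys : ys = 1 / p) (hws : ws = r / p - c)
    (J : Matrix (Fin 3) (Fin 3) ℝ)
    (hJ : J = !![0, 0, -ys; r * ws, -ws, 0; p, 0, 0]) :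
    J.charpoly = (X + C ws) * (X ^ 2 + 1) ∧
    spectrum ℂ (J.map (Complex.ofReal)) = {-(ws : ℂ), Complex.I, -Complex.I} := by
  have hyp : ys * p = 1 := by
    rw [hys]; field_simp
  have hcp : J.charpoly = (X + C ws) * (X ^ 2 + 1) := by
    subst hJ
    rw [Matrix.charpoly, Matrix.det_fin_three]
    simp [Matrix.charmatrix_apply, Matrix.diagonal, Matrix.vecHead, Matrix.vecTail]
    ring_nf
    have hC : (C ys * C p : ℝ[X]) = 1 := by rw [← C_mul, hyp, map_one]
    linear_combination (X + C ws) * hC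
  refine ⟨hcp, ?_⟩
  rw [spec_eq_charpoly_roots]
  have hmap : J.map Complex.ofReal = J.map (Complex.ofRealHom : ℝ →+* ℂ) := rfl
  rw [hmap, Matrix.charpoly_map, hcp]
  ext z
  simp only [Set.mem_setOf_eq, Polynomial.map_mul, Polynomial.map_add, Polynomial.map_pow,
    Polynomial.map_one, Polynomial.map_X, Polynomial.map_C, eval_mul, eval_add, eval_pow,
    eval_X, eval_C, eval_one, mul_eq_zero, Complex.ofRealHom_eq_coe, Set.mem_insert_iff,
    Set.mem_singleton_iff]
  constructor
  · rintro (h1 | h2)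
    · left; linear_combination h1
    · have : (z - Complex.I) * (z + Complex.I) = 0 := by
        linear_combination h2 - Complex.I_sq * (1:ℂ)
      rcases mul_eq_zero.mp this with h3 | h3
      · right; left; linear_combination h3
      · right; right; linear_combination h3
  · rintro (rfl | rfl | rfl)
    · left; ring
    · right; rw [Complex.I_sq]; ring
    · right; rw [neg_sq, Complex.I_sq]; ring
end

section
/- Let s ∈ ℝ with s > 0, and consider the polynomial P(X) = X³ + X² + (1 − (3/2)·s)·X + (1 + s) over ℂ. Then P has a root z ∈ ℂ with Re z > 0. -/
/-- For `s > 0`, the characteristic polynomial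
`X³ + X² + (1 − (3/2)s)X + (1 + s)` has a root with positive real part
(linear instability of the interior fixed point). -/
theorem minsky_wage_led_unstable_for_pos_s
    (s : ℝ) (hs : 0 < s) :
    ∃ z : ℂ, z ^ 3 + z ^ 2 + (1 - (3 / 2 : ℂ) * (s : ℂ)) * z + (1 + (s : ℂ)) = 0 ∧
      0 < z.re := by
  -- the real cubic
  have hab : (-2 - 2*s : ℝ) ≤ -1 := by linarith
  have hcont : ContinuousOn (fun x : ℝ => x^3 + x^2 + (1 - 3/2*s)*x + (1+s))
      (Set.Icc (-2-2*s) (-1)) := by fun_prop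
  have hfa : (-2-2*s:ℝ)^3 + (-2-2*s)^2 + (1 - 3/2*s)*(-2-2*s) + (1+s) ≤ 0 := by nlinarith
  have hfb : (0:ℝ) ≤ (-1:ℝ)^3 + (-1)^2 + (1 - 3/2*s)*(-1) + (1+s) := by nlinarith
  obtain ⟨r, hrmem, hfr⟩ := intermediate_value_Icc hab hcont ⟨hfa, hfb⟩
  simp only at hfr
  have hr1 : r < -1 := by
    rcases lt_or_eq_of_le hrmem.2 with h | h
    · exact h
    · exfalso; rw [h] at hfr; nlinarith
  have hrootC : (r:ℂ)^3 + (r:ℂ)^2 + (1 - 3/2*(s:ℂ))*(r:ℂ) + (1+(s:ℂ)) = 0 := by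
    have h2 := congrArg (fun x : ℝ => (x:ℂ)) hfr
    push_cast at h2
    linear_combination h2
  set d : ℝ := (1+r)^2 - 4*(r^2+r+1-3/2*s) with hd
  set w : ℂ := if 0 ≤ d then ((Real.sqrt d : ℝ) : ℂ) else ((Real.sqrt (-d) : ℝ) : ℂ) * Complex.I
    with hwdef
  have hw2 : w^2 = (d:ℂ) := by
    rw [hwdef]
    split_ifs with h
    · rw [← Complex.ofReal_pow, Real.sq_sqrt h]
    · rw [mul_pow, Complex.I_sq, ← Complex.ofReal_pow, Real.sq_sqrt (by linarith)]
      push_cast; ring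
  have hwre : 0 ≤ w.re := by
    rw [hwdef]; split_ifs with h
    · simp [Real.sqrt_nonneg]
    · simp
  have hw2' : w^2 = (1+(r:ℂ))^2 - 4*((r:ℂ)^2+(r:ℂ)+1-3/2*(s:ℂ)) := by
    rw [hw2, hd]; push_cast; ring
  refine ⟨((-(1+(r:ℂ))) + w)/2, ?_, ?_⟩
  · linear_combination (((((-(1+(r:ℂ))) + w)/2 - (r:ℂ))/4)) * hw2' + hrootC
  · have : (((-(1+(r:ℂ))) + w)/2).re = (-(1+r) + w.re)/2 := by
      simp [Complex.div_re, Complex.add_re]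
    rw [this]
    have : (0:ℝ) < -(1+r) := by linarith
    linarith
end

section
/- Let s ∈ ℝ with −1 < s < 0, and consider the polynomial P(X) = X³ + X² + (1 − (3/2)·s)·X + (1 + s) over ℂ. Then every root z ∈ ℂ of P satisfies Re z < 0. -/
/-- For `−1 < s < 0`, every root of the characteristic polynomial
`X³ + X² + (1 − (3/2)s)X + (1 + s)` has negative real part
(linear stability of the interior fixed point). -/
theorem minsky_wage_led_stable_for_neg_s
    (s : ℝ) (hs1 : -1 < s) (hs2 : s < 0) :
    ∀ z : ℂ, z ^ 3 + z ^ 2 + (1 - (3 / 2 : ℂ) * (s : ℂ)) * z + (1 + (s : ℂ)) = 0 →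
      z.re < 0 := by
  intro z hz
  by_contra h
  push_neg at h
  rw [Complex.ext_iff] at hz
  simp only [pow_succ, pow_zero, one_mul, Complex.mul_re, Complex.mul_im,
    Complex.add_re, Complex.add_im, Complex.sub_re, Complex.sub_im,
    Complex.one_re, Complex.one_im, Complex.ofReal_re, Complex.ofReal_im,
    Complex.zero_re, Complex.zero_im, Complex.div_re, Complex.div_im,
    Complex.re_ofNat, Complex.im_ofNat, Complex.normSq_ofNat] at hz
  norm_num at hz
  obtain ⟨h1, h2⟩ := hz
  set x := z.re
  set y := z.im
  rcases eq_or_ne y 0 with hy0 | hy0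
  · rw [hy0] at h1
    nlinarith [sq_nonneg x, mul_nonneg h (mul_nonneg h h), mul_nonneg h h]
  · have key : 3 * x ^ 2 - y ^ 2 + 2 * x + (1 - 3 / 2 * s) = 0 := by
      have h2' : y * (3 * x ^ 2 - y ^ 2 + 2 * x + (1 - 3 / 2 * s)) = 0 := by
        nlinarith [h2]
      rcases mul_eq_zero.mp h2' with h' | h'
      · exact absurd h' hy0
      · exact h'
    nlinarith [mul_nonneg h (mul_nonneg h h), mul_nonneg h h, sq_nonneg y]
end

section
/- For s ∈ ℝ with s > −1, consider the polynomial P(X) = X³ + X² + (1 − (3/2)·s)·X + (1 + s) over ℂ. Then there exists ω ∈ ℝ with ω ≠ 0 and P(i·ω) = 0 if and only if s = 0, and in that case the purely imaginary roots are exactly i and −i. -/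
/-- The characteristic polynomial `X³ + X² + (1 − (3/2)s)X + (1 + s)` has a
nonzero purely imaginary root iff `s = 0`, in which case the purely imaginary
roots are exactly `i` and `−i` (the Hopf bifurcation at `s = 0`). -/
theorem minsky_wage_led_hopf_crossing
    (s : ℝ) (hs : -1 < s) :
    ((∃ ω : ℝ, ω ≠ 0 ∧
        (Complex.I * (ω : ℂ)) ^ 3 + (Complex.I * (ω : ℂ)) ^ 2 +
          (1 - (3 / 2 : ℂ) * (s : ℂ)) * (Complex.I * (ω : ℂ)) + (1 + (s : ℂ)) = 0) ↔
      s = 0) ∧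
    (s = 0 → ∀ z : ℂ, z.re = 0 →
      (z ^ 3 + z ^ 2 + (1 - (3 / 2 : ℂ) * (s : ℂ)) * z + (1 + (s : ℂ)) = 0 ↔
        z = Complex.I ∨ z = -Complex.I)) := by
  constructor
  · constructor
    · rintro ⟨ω, hω, h⟩
      have hre := congrArg Complex.re h
      have him := congrArg Complex.im h
      simp [Complex.ext_iff, pow_succ, Complex.add_re, Complex.add_im,
        Complex.mul_re, Complex.mul_im] at hre him
      have h2 : ω * (-(ω * ω) + (1 - 3 / 2 * s)) = 0 := by linear_combination him
      rcases mul_eq_zero.mp h2 with h3 | h3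
      · exact absurd h3 hω
      · linarith
    · rintro rfl
      refine ⟨1, one_ne_zero, ?_⟩
      push_cast
      ring_nf
      linear_combination (Complex.I + 1) * Complex.I_sq
  · rintro rfl z hz
    have hzI : z = (z.im : ℂ) * Complex.I := by
      rw [Complex.ext_iff]; simp [hz]
    constructor
    · intro h
      rw [hzI] at h ⊢
      have hre := congrArg Complex.re h
      simp [pow_succ, Complex.add_re, Complex.mul_re, Complex.mul_im] at hre
      have h1 : z.im * z.im = 1 := by linarith
      rcases mul_self_eq_one_iff.mp h1 with h2 | h2 <;> rw [h2] <;> simp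
    · rintro (rfl | rfl) <;> push_cast <;> ring_nf
      · linear_combination (Complex.I + 1) * Complex.I_sq
      · linear_combination (1 - Complex.I) * Complex.I_sq
end

section
/- Let c, r, δ > 0, let y : ℝ → ℝ be continuous with r · y t ≤ c − δ for all t ≥ 0, and let w : ℝ → ℝ be differentiable with w 0 > 0 and ẇ t = w t · (−c + r · y t − w t) for all t ≥ 0. Then 0 < w t ≤ w 0 · Real.exp (−δ · t) for all t ≥ 0; in particular w t → 0 as t → ∞. -/
/-!
Along the solution the scavenger equation is linear, `ẇ = φ w` with the continuous
coefficient `φ = −c + r y − w`, so `w t = w 0 · exp (∫₀ᵗ φ)`: the wage share never changes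
sign. Once `w > 0` is known, `r y ≤ c − δ` gives `φ ≤ −δ − w ≤ −δ`, hence `∫₀ᵗ φ ≤ −δ t`.
-/

open Set Real Filter

theorem eq_mul_exp_integral_of_deriv_eq_mul {w φ : ℝ → ℝ} {a : ℝ} (hw : Differentiable ℝ w)
    (hφ : Continuous φ) (hderiv : ∀ t, a ≤ t → deriv w t = w t * φ t) {t : ℝ} (ht : a ≤ t) :
    w t = w a * exp (∫ s in a..t, φ s) := by
  set g : ℝ → ℝ := fun s ↦ w s * exp (-∫ u in a..s, φ u)
  have hg : ∀ s, HasDerivAt g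
      (deriv w s * exp (-∫ u in a..s, φ u) + w s * (exp (-∫ u in a..s, φ u) * -φ s)) s :=
    fun s ↦ (hw s).hasDerivAt.mul (hφ.integral_hasStrictDerivAt a s).hasDerivAt.neg.exp
  have hconst : g t = g a :=
    constant_of_has_deriv_right_zero (fun s _ ↦ (hg s).continuousAt.continuousWithinAt)
      (fun s hs ↦ by
        convert (hg s).hasDerivWithinAt using 1
        rw [hderiv s hs.1]
        ring)
      t ⟨ht, le_rfl⟩
  simp only [g, intervalIntegral.integral_same, neg_zero, exp_zero, mul_one] at hconst
  rw [← hconst, mul_assoc, ← exp_add, neg_add_cancel, exp_zero, mul_one]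

theorem wage_share_damps_to_zero_general
    (c r δ : ℝ) (hδ : 0 < δ)
    (y : ℝ → ℝ) (hy : Continuous y) (hyb : ∀ t : ℝ, 0 ≤ t → r * y t ≤ c - δ)
    (w : ℝ → ℝ) (hw : Differentiable ℝ w) (hw0 : 0 < w 0)
    (hw' : ∀ t : ℝ, 0 ≤ t → deriv w t = w t * (-c + r * y t - w t)) :
    (∀ t : ℝ, 0 ≤ t → 0 < w t ∧ w t ≤ w 0 * Real.exp (-δ * t)) ∧
    Filter.Tendsto w Filter.atTop (nhds 0) := by
  have hφ : Continuous fun t ↦ -c + r * y t - w t := by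
    have := hw.continuous
    fun_prop
  have hsol := fun t (ht : 0 ≤ t) ↦ eq_mul_exp_integral_of_deriv_eq_mul hw hφ hw' ht
  have hpos : ∀ t, 0 ≤ t → 0 < w t := fun t ht ↦ hsol t ht ▸ by positivity
  have hbound : ∀ t, 0 ≤ t → w t ≤ w 0 * exp (-δ * t) := by
    intro t ht
    have hint : ∫ s in (0 : ℝ)..t, (-c + r * y s - w s) ≤ -δ * t := by
      calc ∫ s in (0 : ℝ)..t, (-c + r * y s - w s)
          ≤ ∫ _ in (0 : ℝ)..t, -δ :=
            intervalIntegral.integral_mono_on ht (hφ.intervalIntegrable 0 t)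
              intervalIntegrable_const fun s hs ↦ by
                linarith [hyb s hs.1, hpos s hs.1]
        _ = -δ * t := by simp [mul_comm]
    rw [hsol t ht]
    gcongr
  refine ⟨fun t ht ↦ ⟨hpos t ht, hbound t ht⟩, ?_⟩
  have hdecay : Tendsto (fun t ↦ w 0 * exp (-δ * t)) atTop (nhds 0) := by
    simpa using ((tendsto_exp_atBot.comp
      (tendsto_id.const_mul_atTop_of_neg (neg_neg_of_pos hδ))).const_mul (w 0))
  refine tendsto_of_tendsto_of_tendsto_of_le_of_le' tendsto_const_nhds hdecay ?_ ?_ <;>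
    filter_upwards [eventually_ge_atTop 0] with t ht
  exacts [(hpos t ht).le, hbound t ht]

/-- In the scavenger equation `ẇ = w(−c + r y − w)`, if output stays so low
that `r y ≤ c − δ`, then the wage share stays positive, decays at least
exponentially, and tends to `0`. -/
theorem wage_share_damps_to_zero
    (c r δ : ℝ) (hc : 0 < c) (hr : 0 < r) (hδ : 0 < δ)
    (y : ℝ → ℝ) (hy : Continuous y) (hyb : ∀ t : ℝ, 0 ≤ t → r * y t ≤ c - δ)
    (w : ℝ → ℝ) (hw : Differentiable ℝ w) (hw0 : 0 < w 0)
    (hw' : ∀ t : ℝ, 0 ≤ t → deriv w t = w t * (-c + r * y t - w t)) :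
    (∀ t : ℝ, 0 ≤ t → 0 < w t ∧ w t ≤ w 0 * Real.exp (-δ * t)) ∧
    Filter.Tendsto w Filter.atTop (nhds 0) :=
  wage_share_damps_to_zero_general c r δ hδ y hy hyb w hw hw0 hw'
end

section
/- Let c, r > 0 and M ∈ ℝ, let y : ℝ → ℝ be continuous with 0 ≤ r · y t ≤ M for all t ≥ 0, and let w : ℝ → ℝ be differentiable with w 0 > 0 and ẇ t = w t · (−c + r · y t − w t) for all t ≥ 0. Then 0 < w t ≤ max (w 0) (M − c) for all t ≥ 0. -/
/-!
Writing `k = -c + r * y`, the equation is the logistic-type equation `ẇ = w (k - w)`, and both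
bounds are fencing (barrier) arguments. At a level `m + ε` with `m ≥ max (w 0) (M - c)` the drift
`w (k - w)` is negative, so `w` cannot cross it upward. The decaying barrier `w 0 * exp (-K t)`,
`K > c + w 0`, cannot be crossed downward: on it `0 < w ≤ w 0`, so `k - w ≥ -c - w 0 > -K`.
-/

open Real

theorem image_le_of_deriv_lt_deriv_boundary_Ici {f f' B B' : ℝ → ℝ}
    (hf : ∀ t, 0 ≤ t → HasDerivAt f (f' t) t) (hB : ∀ t, HasDerivAt B (B' t) t)
    (h0 : f 0 ≤ B 0) (bound : ∀ t, 0 ≤ t → f t = B t → f' t < B' t) :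
    ∀ t, 0 ≤ t → f t ≤ B t := fun _ ht =>
  image_le_of_deriv_right_lt_deriv_boundary
    (fun x hx => (hf x hx.1).continuousAt.continuousWithinAt)
    (fun x hx => (hf x hx.1).hasDerivWithinAt) h0 hB
    (fun x hx => bound x hx.1) ⟨ht, le_rfl⟩

section Logistic

variable {w k : ℝ → ℝ} (hw : ∀ t, 0 ≤ t → HasDerivAt w (w t * (k t - w t)) t)
include hw

theorem logistic_le_max {K : ℝ} (hk : ∀ t, 0 ≤ t → k t ≤ K) (hw0 : 0 ≤ w 0) :
    ∀ t, 0 ≤ t → w t ≤ max (w 0) K := by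
  intro t ht
  refine le_of_forall_pos_le_add fun ε hε => ?_
  refine image_le_of_deriv_lt_deriv_boundary_Ici (B := fun _ => max (w 0) K + ε) hw
    (fun _ => hasDerivAt_const _ _) (by linarith [le_max_left (w 0) K]) ?_ t ht
  intro x hx hwx
  have hpos : 0 < w x := by rw [hwx]; linarith [le_max_left (w 0) K]
  have hneg : k x - w x < 0 := by rw [hwx]; linarith [hk x hx, le_max_right (w 0) K]
  exact mul_neg_of_pos_of_neg hpos hneg

theorem logistic_mul_exp_le {c K : ℝ} (hk : ∀ t, 0 ≤ t → -c ≤ k t) (hw0 : 0 < w 0)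
    (hK0 : 0 ≤ K) (hK : c + w 0 < K) :
    ∀ t, 0 ≤ t → w 0 * exp (-K * t) ≤ w t := by
  set E : ℝ → ℝ := fun t => w 0 * exp (-K * t)
  have hE : ∀ t, HasDerivAt E (-K * E t) t := fun t =>
    (((hasDerivAt_id t).const_mul (-K)).exp.const_mul (w 0)).congr_deriv
      (by simp only [E, id]; ring)
  intro t ht
  refine neg_le_neg_iff.mp <| image_le_of_deriv_lt_deriv_boundary_Ici (B := fun t => -E t)
    (fun t ht => (hw t ht).neg) (fun t => (hE t).neg) (by simp [E]) ?_ t ht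
  intro x hx hwx
  have hwx : w x = E x := neg_inj.mp hwx
  have hpos : 0 < w x := by rw [hwx]; positivity
  have hle : w x ≤ w 0 := by
    rw [hwx]
    exact mul_le_of_le_one_right hw0.le (exp_le_one_iff.mpr (by nlinarith))
  have hdrift : -K < k x - w x := by linarith [hk x hx]
  rw [← hwx]
  linarith [mul_lt_mul_of_pos_left hdrift hpos]

end Logistic

theorem wage_share_positive_and_bounded_general
    (c r M : ℝ) (hc : 0 < c)
    (y : ℝ → ℝ)
    (hyb : ∀ t : ℝ, 0 ≤ t → 0 ≤ r * y t ∧ r * y t ≤ M)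
    (w : ℝ → ℝ) (hw : Differentiable ℝ w) (hw0 : 0 < w 0)
    (hw' : ∀ t : ℝ, 0 ≤ t → deriv w t = w t * (-c + r * y t - w t)) :
    ∀ t : ℝ, 0 ≤ t → 0 < w t ∧ w t ≤ max (w 0) (M - c) := by
  have hlogistic : ∀ t, 0 ≤ t → HasDerivAt w (w t * (-c + r * y t - w t)) t :=
    fun t ht => hw' t ht ▸ (hw t).hasDerivAt
  have hlower := logistic_mul_exp_le hlogistic (fun t ht => by linarith [(hyb t ht).1]) hw0
    (by positivity) (lt_add_one (c + w 0))
  have hupper := logistic_le_max (K := M - c) hlogistic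
    (fun t ht => by linarith [(hyb t ht).2]) hw0.le
  exact fun t ht => ⟨(mul_pos hw0 (exp_pos _)).trans_le (hlower t ht), hupper t ht⟩

/-- In the scavenger equation `ẇ = w(−c + r y − w)` with bounded output,
the enslaved wage share remains positive and bounded. -/
theorem wage_share_positive_and_bounded
    (c r M : ℝ) (hc : 0 < c) (hr : 0 < r)
    (y : ℝ → ℝ) (hy : Continuous y)
    (hyb : ∀ t : ℝ, 0 ≤ t → 0 ≤ r * y t ∧ r * y t ≤ M)
    (w : ℝ → ℝ) (hw : Differentiable ℝ w) (hw0 : 0 < w 0)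
    (hw' : ∀ t : ℝ, 0 ≤ t → deriv w t = w t * (-c + r * y t - w t)) :
    ∀ t : ℝ, 0 ≤ t → 0 < w t ∧ w t ≤ max (w 0) (M - c) :=
  wage_share_positive_and_bounded_general c r M hc y hyb w hw hw0 hw'
end
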